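/- Suppose in addition that there is a constant c > 0 with L ≤ c·n²·F(x*) (as holds when F is the multilinear extension of a submodular set function). Then the Frank–Wolfe algorithm's best iterate satisfies max_{0 ≤ j ≤ T} F(x(t_j)) ≥ (1/4 − (c/8)·n³·H_{2,T}/H_T²) F(x*), where H_T = ∑_{k=1}^T 1/k and H_{2,T} = ∑_{k=1}^T 1/k². -/

import Mathlib

/-!
With `s_j = 1 + H_j / H_T` the step ratio is `s_j / s_{j+1}`, so
`s_{j+1} x(t_{j+1}) = s_j x(t_j) + (s_{j+1} - s_j) v_j` and every coordinate of `x(t_j)`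
stays below `1 - 1/s_j`. DR-submodularity makes `∇F` antitone, so `F` is concave along
monotone segments; this gives
`⟨∇F(x), x* - x⟩ ≥ F(x ∨ x*) + F(x ∧ x*) - 2F(x) ≥ F(x*)/s_j - 2F(x)`.
Together with `L`-smoothness, each step preserves
`s_j² F(x(t_j)) ≥ (s_j - 1) F(x*) - (Ln/2) ∑_{k<j} (s_{k+1} - s_k)²`. At `j = T` we have
`s_T = 2` and `∑_{k<T} (s_{k+1} - s_k)² = H_{2,T}/H_T²`, so already the last iterate satisfies
`4 F(x(t_T)) ≥ F(x*) - (Ln/2) H_{2,T}/H_T²`, and `L ≤ c n² F(x*)` finishes.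
-/

/-- The harmonic number `H j = ∑_{k=1}^j 1/k` (with `H 0 = 0`). -/
noncomputable def harmonicNum (j : ℕ) : ℝ := ∑ k ∈ Finset.range j, (1 : ℝ) / (k + 1)

/-- `H_{2,j} = ∑_{k=1}^j 1/k²`. -/
noncomputable def harmonicNum2 (j : ℕ) : ℝ := ∑ k ∈ Finset.range j, (1 : ℝ) / ((k : ℝ) + 1) ^ 2

/-- The time values `t_j = 1/(1 - ln(1 + H_j/H_T)) - 1` of the Frank–Wolfe algorithm. -/
noncomputable def fwTime (T j : ℕ) : ℝ :=
  1 / (1 - Real.log (1 + harmonicNum j / harmonicNum T)) - 1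

/-- The Frank–Wolfe step ratio `e^{-1/(1+t_j) + 1/(1+t_{j+1})}`. -/
noncomputable def fwRatio (T j : ℕ) : ℝ :=
  Real.exp (-(1 / (1 + fwTime T j)) + 1 / (1 + fwTime T (j + 1)))

/-- `√a_{t_j} = e^{t_j/(1+t_j)}`. -/
noncomputable def fwSqa (T j : ℕ) : ℝ := Real.exp (fwTime T j / (1 + fwTime T j))

/-- `F : [0,1]^n → ℝ` is DR-submodular: for all `x ≤ y` in `[0,1]^n`, coordinates `i` and
`a > 0` with `x + a·e_i, y + a·e_i ∈ [0,1]^n`, one has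
`F(x + a·e_i) - F(x) ≥ F(y + a·e_i) - F(y)`. -/
def DRSubmodular {n : ℕ} (F : (Fin n → ℝ) → ℝ) : Prop :=
  ∀ x y : Fin n → ℝ, x ∈ Set.Icc (0 : Fin n → ℝ) 1 → y ∈ Set.Icc (0 : Fin n → ℝ) 1 →
    x ≤ y → ∀ i : Fin n, ∀ a : ℝ, 0 < a →
      x + a • (Pi.single i 1 : Fin n → ℝ) ∈ Set.Icc (0 : Fin n → ℝ) 1 →
      y + a • (Pi.single i 1 : Fin n → ℝ) ∈ Set.Icc (0 : Fin n → ℝ) 1 →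
      F (y + a • (Pi.single i 1 : Fin n → ℝ)) - F y ≤
        F (x + a • (Pi.single i 1 : Fin n → ℝ)) - F x

/-- The continuous linear map `y ↦ ⟨g, y⟩ = ∑ i, g i * y i` on `ℝⁿ`. -/
noncomputable def gradCLM {n : ℕ} (g : Fin n → ℝ) : (Fin n → ℝ) →L[ℝ] ℝ :=
  ∑ i, g i • (ContinuousLinearMap.proj i : (Fin n → ℝ) →L[ℝ] ℝ)

/-- `gradF` is the gradient of `F` on the box `[0,1]^n`: at each point of the box, `F` is
differentiable within the box with derivative `y ↦ ⟨gradF z, y⟩`. -/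
def HasGradientOnBox {n : ℕ} (F : (Fin n → ℝ) → ℝ) (gradF : (Fin n → ℝ) → Fin n → ℝ) : Prop :=
  ∀ z ∈ Set.Icc (0 : Fin n → ℝ) 1, HasFDerivWithinAt F (gradCLM (gradF z)) (Set.Icc 0 1) z


open Set

section FrankWolfe

variable {n : ℕ} {F : (Fin n → ℝ) → ℝ} {gradF : (Fin n → ℝ) → Fin n → ℝ} {L : ℝ}

theorem gradCLM_apply (g y : Fin n → ℝ) : gradCLM g y = g ⬝ᵥ y := by
  simp [gradCLM, dotProduct]

theorem apply_mem_Icc_of_mem_Icc {z : Fin n → ℝ} (hz : z ∈ Icc 0 1) (i : Fin n) :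
    z i ∈ Icc (0 : ℝ) 1 :=
  ⟨hz.1 i, hz.2 i⟩

theorem HasGradientOnBox.hasDerivWithinAt_line (hgrad : HasGradientOnBox F gradF)
    {z d : Fin n → ℝ} {I : Set ℝ} {t : ℝ} (hI : MapsTo (fun s : ℝ => z + s • d) I (Icc 0 1))
    (ht : t ∈ I) :
    HasDerivWithinAt (fun s => F (z + s • d)) (gradF (z + t • d) ⬝ᵥ d) I t := by
  have hline : HasDerivWithinAt (fun s : ℝ => z + s • d) d I t := by
    simpa using (((hasDerivAt_id t).smul_const d).const_add z).hasDerivWithinAt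
  have := (hgrad _ (hI ht)).comp_hasDerivWithinAt t hline hI
  rwa [gradCLM_apply] at this

theorem add_smul_single_mem_Icc {z : Fin n → ℝ} (hz : z ∈ Icc 0 1) {i : Fin n} {a : ℝ}
    (ha : a ∈ Icc (-z i) (1 - z i)) : z + a • Pi.single i 1 ∈ Icc (0 : Fin n → ℝ) 1 := by
  constructor <;> intro k <;> by_cases hk : k = i
  all_goals simp [hk]
  all_goals first | (subst hk; linarith [ha.1, ha.2]) | exact hz.1 k | exact hz.2 k

theorem DRSubmodular.grad_apply_le_of_lt (hDR : DRSubmodular F)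
    (hgrad : HasGradientOnBox F gradF)
    {u w : Fin n → ℝ} (hu : u ∈ Icc 0 1) (hw : w ∈ Icc 0 1) (huw : u ≤ w) {i : Fin n}
    (hi : -u i < 1 - w i) : gradF w i ≤ gradF u i := by
  set e : Fin n → ℝ := Pi.single i 1 with he
  set I := Icc (-u i) (1 - w i)
  have hIw : I ⊆ Icc (-w i) (1 - w i) := fun a ha => ⟨by linarith [huw i, ha.1], ha.2⟩
  have hIu : I ⊆ Icc (-u i) (1 - u i) := fun a ha => ⟨ha.1, by linarith [huw i, ha.2]⟩
  have h0 : (0 : ℝ) ∈ I := ⟨by linarith [(apply_mem_Icc_of_mem_Icc hu i).1],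
    by linarith [(apply_mem_Icc_of_mem_Icc hw i).2]⟩
  have hderiv :=
    (hgrad.hasDerivWithinAt_line (fun a ha => add_smul_single_mem_Icc hu (hIu ha)) h0).sub
      (hgrad.hasDerivWithinAt_line (fun a ha => add_smul_single_mem_Icc hw (hIw ha)) h0)
  have hmono : MonotoneOn (fun a : ℝ => F (u + a • e) - F (w + a • e)) I := by
    intro a ha b hb hab
    rcases hab.eq_or_lt with rfl | hlt
    · rfl
    have hub : u + a • e + (b - a) • e = u + b • e := by module
    have hwb : w + a • e + (b - a) • e = w + b • e := by module
    have := hDR (u + a • e) (w + a • e) (add_smul_single_mem_Icc hu (hIu ha))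
      (add_smul_single_mem_Icc hw (hIw ha)) (add_le_add_left huw _) i (b - a) (by linarith)
      (hub ▸ add_smul_single_mem_Icc hu (hIu hb)) (hwb ▸ add_smul_single_mem_Icc hw (hIw hb))
    simp only [← he, hub, hwb] at this
    linarith
  have := hderiv.nonneg_of_monotoneOn ((uniqueDiffOn_Icc hi) 0 h0).accPt hmono
  simpa [e, dotProduct_single] using this

theorem DRSubmodular.antitoneOn_grad (hDR : DRSubmodular F)
    (hgrad : HasGradientOnBox F gradF) : AntitoneOn gradF (Icc 0 1) := by
  intro u hu w hw huw i
  have hui := apply_mem_Icc_of_mem_Icc hu i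
  have hwi := apply_mem_Icc_of_mem_Icc hw i
  rcases (show -u i ≤ 1 - w i by linarith [hui.1, hwi.2]).lt_or_eq with hi | hi
  · exact hDR.grad_apply_le_of_lt hgrad hu hw huw hi
  -- Now `u i = 0` and `w i = 1` leave no room to move along the `i`-th axis: use a midpoint.
  set m := Function.update u i (1 / 2)
  have hm : m ∈ Icc 0 1 := ⟨le_update_iff.2 ⟨by norm_num, fun k _ => hu.1 k⟩,
    update_le_iff.2 ⟨by norm_num, fun k _ => hu.2 k⟩⟩
  have hum : u ≤ m := by
    rw [le_update_iff]; exact ⟨by linarith [hui.1, hwi.2], fun _ _ => le_rfl⟩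
  have hmw : m ≤ w := by
    rw [update_le_iff]; exact ⟨by linarith [hui.1, hwi.2], fun k _ => huw k⟩
  calc gradF w i ≤ gradF m i :=
        hDR.grad_apply_le_of_lt hgrad hm hw hmw (by simp [m]; linarith [hwi.2])
    _ ≤ gradF u i := hDR.grad_apply_le_of_lt hgrad hu hm hum (by simp [m]; linarith [hui.1])

theorem HasGradientOnBox.exists_sub_eq_dotProduct (hgrad : HasGradientOnBox F gradF)
    {z w : Fin n → ℝ} (hz : z ∈ Icc 0 1) (hw : w ∈ Icc 0 1) :
    ∃ t ∈ Ioo (0 : ℝ) 1, F w - F z = gradF (z + t • (w - z)) ⬝ᵥ (w - z) := by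
  have hmaps : MapsTo (fun s : ℝ => z + s • (w - z)) (Icc 0 1) (Icc 0 1) := fun s hs =>
    (convex_Icc 0 1).add_smul_sub_mem hz hw hs
  have hderiv (s) (hs : s ∈ Icc (0 : ℝ) 1) := hgrad.hasDerivWithinAt_line hmaps hs
  obtain ⟨t, ht, heq⟩ := exists_hasDerivAt_eq_slope (fun s : ℝ => F (z + s • (w - z)))
    (fun s => gradF (z + s • (w - z)) ⬝ᵥ (w - z)) zero_lt_one
    (fun s hs => (hderiv s hs).continuousWithinAt)
    (fun s hs => (hderiv s (Ioo_subset_Icc_self hs)).hasDerivAt (Icc_mem_nhds hs.1 hs.2))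
  exact ⟨t, ht, by simpa using heq.symm⟩

theorem DRSubmodular.le_add_dotProduct_grad (hDR : DRSubmodular F)
    (hgrad : HasGradientOnBox F gradF) {z w : Fin n → ℝ} (hz : z ∈ Icc 0 1) (hw : w ∈ Icc 0 1)
    (hzw : z ≤ w ∨ w ≤ z) : F w ≤ F z + gradF z ⬝ᵥ (w - z) := by
  obtain ⟨t, ht, heq⟩ := hgrad.exists_sub_eq_dotProduct hz hw
  set p := z + t • (w - z)
  have hp : p ∈ Icc 0 1 := (convex_Icc 0 1).add_smul_sub_mem hz hw (Ioo_subset_Icc_self ht)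
  suffices gradF p ⬝ᵥ (w - z) ≤ gradF z ⬝ᵥ (w - z) by linarith
  rcases hzw with hzw | hwz
  · have hd : 0 ≤ w - z := sub_nonneg.2 hzw
    exact dotProduct_le_dotProduct_of_nonneg_right
      (hDR.antitoneOn_grad hgrad hz hp (le_add_of_nonneg_right (smul_nonneg ht.1.le hd))) hd
  · have hd : 0 ≤ z - w := sub_nonneg.2 hwz
    have := dotProduct_le_dotProduct_of_nonneg_right
      (hDR.antitoneOn_grad hgrad hp hz (add_le_of_nonpos_right
        (smul_nonpos_of_nonneg_of_nonpos ht.1.le (sub_nonpos.2 hwz)))) hd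
    rw [← neg_sub z w, dotProduct_neg, dotProduct_neg]
    linarith

theorem DRSubmodular.le_apply_add_smul_sub (hDR : DRSubmodular F)
    (hgrad : HasGradientOnBox F gradF) {y w : Fin n → ℝ} (hy : y ∈ Icc 0 1) (hw : w ∈ Icc 0 1)
    (hyw : y ≤ w) {m : ℝ} (hm : m ∈ Icc (0 : ℝ) 1) :
    (1 - m) * F y + m * F w ≤ F (y + m • (w - y)) := by
  set p := y + m • (w - y)
  have hp : p ∈ Icc 0 1 := (convex_Icc 0 1).add_smul_sub_mem hy hw hm
  have hyp : y ≤ p := le_add_of_nonneg_right (smul_nonneg hm.1 (sub_nonneg.2 hyw))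
  have hpw : p ≤ w := by
    have : w = p + (1 - m) • (w - y) := by module
    rw [this]
    exact le_add_of_nonneg_right (smul_nonneg (sub_nonneg.2 hm.2) (sub_nonneg.2 hyw))
  have h1 := hDR.le_add_dotProduct_grad hgrad hp hy (Or.inr hyp)
  have h2 := hDR.le_add_dotProduct_grad hgrad hp hw (Or.inl hpw)
  rw [show y - p = -m • (w - y) by module, dotProduct_smul] at h1
  rw [show w - p = (1 - m) • (w - y) by module, dotProduct_smul] at h2
  simp only [smul_eq_mul] at h1 h2
  linear_combination mul_le_mul_of_nonneg_left h1 (sub_nonneg.2 hm.2) +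
    mul_le_mul_of_nonneg_left h2 hm.1

theorem DRSubmodular.mul_le_apply_sup (hDR : DRSubmodular F) (hgrad : HasGradientOnBox F gradF)
    (hFnonneg : ∀ z ∈ Icc (0 : Fin n → ℝ) 1, 0 ≤ F z) {x y : Fin n → ℝ} (hy : y ∈ Icc 0 1)
    {μ : ℝ} (hμ : μ ∈ Icc (0 : ℝ) 1) (hxμ : ∀ i, x i ≤ 1 - μ) : μ * F y ≤ F (x ⊔ y) := by
  rcases hμ.2.lt_or_eq with hμ1 | rfl
  swap
  · have : x ≤ y := fun i => by linarith [hxμ i, (apply_mem_Icc_of_mem_Icc hy i).1]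
    simp [sup_eq_right.2 this]
  -- `x ⊔ y` lies on the segment from `y` to `w`, at parameter `1 - μ`.
  set m := 1 - μ with hm_def
  have hm : 0 < m := by linarith
  set w := y + m⁻¹ • (x ⊔ y - y)
  have hyw : y ≤ w :=
    le_add_of_nonneg_right (smul_nonneg (inv_nonneg.2 hm.le) (sub_nonneg.2 le_sup_right))
  have hw : w ∈ Icc 0 1 := by
    refine ⟨hy.1.trans hyw, fun i => ?_⟩
    obtain ⟨hyi0, hyi1⟩ := apply_mem_Icc_of_mem_Icc hy i
    have : x i ⊔ y i - y i ≤ m * (1 - y i) := by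
      rw [← max_sub_sub_right, sub_self]
      exact max_le (by nlinarith [hxμ i, mul_nonneg hμ.1 hyi0]) (by nlinarith)
    have := (inv_mul_le_iff₀ hm).2 this
    change y i + m⁻¹ * (x i ⊔ y i - y i) ≤ 1
    linarith
  have hxy : y + m • (w - y) = x ⊔ y := by
    simp only [w, add_sub_cancel_left, smul_smul, mul_inv_cancel₀ hm.ne', one_smul]
    abel
  have := hDR.le_apply_add_smul_sub hgrad hy hw hyw ⟨hm.le, by linarith [hμ.1]⟩
  rw [hxy] at this
  nlinarith [hFnonneg w hw]

theorem DRSubmodular.sub_le_dotProduct_grad (hDR : DRSubmodular F)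
    (hgrad : HasGradientOnBox F gradF) (hFnonneg : ∀ z ∈ Icc (0 : Fin n → ℝ) 1, 0 ≤ F z)
    {z y : Fin n → ℝ} (hz : z ∈ Icc 0 1) (hy : y ∈ Icc 0 1) {μ : ℝ} (hμ : μ ∈ Icc (0 : ℝ) 1)
    (hzμ : ∀ i, z i ≤ 1 - μ) : μ * F y - 2 * F z ≤ gradF z ⬝ᵥ (y - z) := by
  have hsup : z ⊔ y ∈ Icc 0 1 := ⟨le_sup_of_le_left hz.1, sup_le hz.2 hy.2⟩
  have hinf : z ⊓ y ∈ Icc 0 1 := ⟨le_inf hz.1 hy.1, inf_le_of_left_le hz.2⟩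
  have h1 := hDR.le_add_dotProduct_grad hgrad hz hsup (Or.inl le_sup_left)
  have h2 := hDR.le_add_dotProduct_grad hgrad hz hinf (Or.inr inf_le_left)
  have hsplit : y - z = (z ⊔ y - z) + (z ⊓ y - z) := by
    linear_combination (norm := abel) -inf_add_sup z y
  rw [hsplit, dotProduct_add]
  linarith [hDR.mul_le_apply_sup hgrad hFnonneg hy hμ hzμ, hFnonneg _ hinf]

def IsLSmoothOnBox (F : (Fin n → ℝ) → ℝ) (gradF : (Fin n → ℝ) → Fin n → ℝ) (L : ℝ) : Prop :=
  ∀ z ∈ Icc (0 : Fin n → ℝ) 1, ∀ w ∈ Icc (0 : Fin n → ℝ) 1,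
    |F w - F z - gradF z ⬝ᵥ (w - z)| ≤ L / 2 * ∑ i, (w i - z i) ^ 2

theorem IsLSmoothOnBox.le_apply_add_smul_sub (hsmooth : IsLSmoothOnBox F gradF L) (hL : 0 ≤ L)
    {z v : Fin n → ℝ} (hz : z ∈ Icc 0 1) (hv : v ∈ Icc 0 1) {γ : ℝ} (hγ : γ ∈ Icc (0 : ℝ) 1) :
    F z + γ * gradF z ⬝ᵥ (v - z) - L / 2 * n * γ ^ 2 ≤ F (z + γ • (v - z)) := by
  set w := z + γ • (v - z)
  have hw : w ∈ Icc 0 1 := (convex_Icc 0 1).add_smul_sub_mem hz hv hγ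
  have hwz : w - z = γ • (v - z) := add_sub_cancel_left z _
  have hwzi (i : Fin n) : w i - z i = γ * (v i - z i) := congrFun hwz i
  have hsq : ∑ i, (w i - z i) ^ 2 ≤ n * γ ^ 2 := by
    calc ∑ i, (w i - z i) ^ 2 ≤ ∑ _i : Fin n, γ ^ 2 := by
          refine Finset.sum_le_sum fun i _ => ?_
          obtain ⟨hzi0, hzi1⟩ := apply_mem_Icc_of_mem_Icc hz i
          obtain ⟨hvi0, hvi1⟩ := apply_mem_Icc_of_mem_Icc hv i
          have : (v i - z i) ^ 2 ≤ 1 := by nlinarith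
          rw [hwzi, mul_pow]
          exact mul_le_of_le_one_right (sq_nonneg γ) this
      _ = n * γ ^ 2 := by simp
  have := (abs_le.1 (hsmooth z hz w hw)).1
  rw [hwz, dotProduct_smul, smul_eq_mul] at this
  nlinarith

theorem DRSubmodular.frankWolfe_step_ge (hDR : DRSubmodular F)
    (hgrad : HasGradientOnBox F gradF) (hFnonneg : ∀ z ∈ Icc (0 : Fin n → ℝ) 1, 0 ≤ F z)
    (hL : 0 ≤ L) (hsmooth : IsLSmoothOnBox F gradF L)
    {z v xstar : Fin n → ℝ} (hz : z ∈ Icc 0 1) (hv : v ∈ Icc 0 1) (hxstar : xstar ∈ Icc 0 1)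
    (hvmax : gradF z ⬝ᵥ xstar ≤ gradF z ⬝ᵥ v) {μ : ℝ} (hμ : μ ∈ Icc (0 : ℝ) 1)
    (hzμ : ∀ i, z i ≤ 1 - μ) {γ : ℝ} (hγ : γ ∈ Icc (0 : ℝ) 1) :
    F z + γ * (μ * F xstar - 2 * F z) - L / 2 * n * γ ^ 2 ≤ F (z + γ • (v - z)) := by
  have hdir : μ * F xstar - 2 * F z ≤ gradF z ⬝ᵥ (v - z) := by
    have := hDR.sub_le_dotProduct_grad hgrad hFnonneg hz hxstar hμ hzμ
    rw [dotProduct_sub] at this ⊢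
    linarith
  linarith [hsmooth.le_apply_add_smul_sub hL hz hv hγ, mul_le_mul_of_nonneg_left hdir hγ.1]

theorem harmonicNum_nonneg (j : ℕ) : 0 ≤ harmonicNum j := by
  unfold harmonicNum; positivity

theorem harmonicNum_succ (j : ℕ) : harmonicNum (j + 1) = harmonicNum j + 1 / (j + 1) := by
  simp [harmonicNum, Finset.sum_range_succ]

theorem one_le_harmonicNum {T : ℕ} (hT : 1 ≤ T) : 1 ≤ harmonicNum T := by
  obtain ⟨k, rfl⟩ := Nat.exists_eq_add_of_le hT
  induction k with
  | zero => simp [harmonicNum]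
  | succ k ih =>
    rw [← add_assoc, harmonicNum_succ]
    have : (0 : ℝ) ≤ 1 / ((1 + k : ℕ) + 1) := by positivity
    linarith [ih (by omega)]

/-- The paper's `√a_{t_j} = e^{1 - 1/(1+t_j)}` (cf. `fwSqa`), in closed form. -/
noncomputable def fwScale (T j : ℕ) : ℝ := 1 + harmonicNum j / harmonicNum T

theorem one_le_fwScale (T j : ℕ) : 1 ≤ fwScale T j := by
  have := div_nonneg (harmonicNum_nonneg j) (harmonicNum_nonneg T)
  unfold fwScale; linarith

theorem fwScale_zero (T : ℕ) : fwScale T 0 = 1 := by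
  simp [fwScale, harmonicNum]

theorem fwScale_self {T : ℕ} (hT : 1 ≤ T) : fwScale T T = 2 := by
  rw [fwScale, div_self (zero_lt_one.trans_le (one_le_harmonicNum hT)).ne']
  norm_num

theorem fwScale_succ_sub (T j : ℕ) :
    fwScale T (j + 1) - fwScale T j = 1 / ((j + 1) * harmonicNum T) := by
  simp only [fwScale, harmonicNum_succ]
  rw [add_div, div_div]
  ring

theorem fwRatio_eq_div (T j : ℕ) : fwRatio T j = fwScale T j / fwScale T (j + 1) := by
  have hinv (k : ℕ) : 1 / (1 + fwTime T k) = 1 - Real.log (fwScale T k) := by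
    rw [fwTime, add_sub_cancel, one_div_one_div, fwScale]
  have hpos (k : ℕ) : 0 < fwScale T k := zero_lt_one.trans_le (one_le_fwScale T k)
  rw [fwRatio, hinv, hinv, show ∀ a b : ℝ, -(1 - a) + (1 - b) = a - b from fun _ _ => by ring,
    Real.exp_sub, Real.exp_log (hpos j), Real.exp_log (hpos (j + 1))]

theorem sum_sq_fwScale_succ_sub (T : ℕ) :
    ∑ k ∈ Finset.range T, (fwScale T (k + 1) - fwScale T k) ^ 2 =
      harmonicNum2 T / harmonicNum T ^ 2 := by
  simp only [fwScale_succ_sub, harmonicNum2, Finset.sum_div]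
  exact Finset.sum_congr rfl fun k _ => by field_simp

theorem fwScale_le_succ (T j : ℕ) : fwScale T j ≤ fwScale T (j + 1) := by
  have := fwScale_succ_sub T j
  have : 0 ≤ 1 / ((j + 1) * harmonicNum T) := by have := harmonicNum_nonneg T; positivity
  linarith

theorem fwScale_succ_sub_le_one {T : ℕ} (hT : 1 ≤ T) (j : ℕ) :
    fwScale T (j + 1) - fwScale T j ≤ 1 := by
  rw [fwScale_succ_sub, div_le_one (by have := one_le_harmonicNum hT; positivity)]
  nlinarith [one_le_harmonicNum hT, (Nat.cast_nonneg j : (0 : ℝ) ≤ j)]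

theorem frankWolfe_potential_step {s s' a a' b R W : ℝ} (hs : 1 ≤ s) (hss' : s ≤ s')
    (hs's : s' ≤ 2 * s) (hb : 0 ≤ b) (hR : 0 ≤ R) (ih : (s - 1) * b - R ≤ s ^ 2 * a)
    (hstep : a + (1 - s / s') * (1 / s * b - 2 * a) - W * (1 - s / s') ^ 2 ≤ a') :
    (s' - 1) * b - (R + W * (s' - s) ^ 2) ≤ s' ^ 2 * a' := by
  have hs0 : 0 < s := by linarith
  have hs'0 : 0 < s' := by linarith
  set δ := s' - s
  have hscaled : (s ^ 2 - δ ^ 2) * a + s' * δ / s * b - W * δ ^ 2 ≤ s' ^ 2 * a' := by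
    have e : s' ^ 2 * (a + (1 - s / s') * (1 / s * b - 2 * a) - W * (1 - s / s') ^ 2) =
        (s ^ 2 - δ ^ 2) * a + s' * δ / s * b - W * δ ^ 2 := by
      simp only [δ]; field_simp; ring
    rw [← e]
    exact mul_le_mul_of_nonneg_left hstep (sq_nonneg s')
  -- The old potential, damped by the factor `1 - δ²/s² ≥ 0`, loses exactly `δ²(b + R)/s² ≥ 0`.
  have hdamp : 0 ≤ 1 - δ ^ 2 / s ^ 2 := by
    rw [sub_nonneg, div_le_one (by positivity)]
    nlinarith
  have hih := mul_le_mul_of_nonneg_left ih hdamp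
  have e1 : (1 - δ ^ 2 / s ^ 2) * (s ^ 2 * a) = (s ^ 2 - δ ^ 2) * a := by field_simp
  have e2 : (1 - δ ^ 2 / s ^ 2) * ((s - 1) * b - R) + s' * δ / s * b - ((s' - 1) * b - R) =
      δ ^ 2 * (b + R) / s ^ 2 := by
    simp only [δ]; field_simp; ring
  have : 0 ≤ δ ^ 2 * (b + R) / s ^ 2 := by positivity
  linarith

theorem convexComb_mem_Icc_one_sub_inv {s s' a b : ℝ} (hs : 0 < s) (hss' : s ≤ s')
    (ha : a ∈ Icc 0 (1 - 1 / s)) (hb : b ∈ Icc (0 : ℝ) 1) :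
    s / s' * a + (1 - s / s') * b ∈ Icc 0 (1 - 1 / s') := by
  have hs' : 0 < s' := hs.trans_le hss'
  have hρ0 : 0 ≤ s / s' := by positivity
  have hρ1 : 0 ≤ 1 - s / s' := sub_nonneg.2 (div_le_one_of_le₀ hss' hs'.le)
  have e : s / s' * (1 - 1 / s) = s / s' - 1 / s' := by field_simp
  refine ⟨add_nonneg (mul_nonneg hρ0 ha.1) (mul_nonneg hρ1 hb.1), ?_⟩
  nlinarith [mul_le_mul_of_nonneg_left ha.2 hρ0, mul_le_mul_of_nonneg_left hb.2 hρ1]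

theorem fwIterate_mem_Icc {T : ℕ} {x v : ℕ → Fin n → ℝ} (hx0 : x 0 = 0)
    (hv : ∀ j < T, v j ∈ Icc 0 1)
    (hstep : ∀ j < T, x (j + 1) = fwRatio T j • x j + (1 - fwRatio T j) • v j) :
    ∀ j ≤ T, ∀ i, x j i ∈ Icc 0 (1 - 1 / fwScale T j) := by
  intro j
  induction j with
  | zero => simp [hx0, fwScale_zero]
  | succ j ih =>
    intro hj i
    rw [hstep j hj, fwRatio_eq_div]
    exact convexComb_mem_Icc_one_sub_inv (zero_lt_one.trans_le (one_le_fwScale T j))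
      (fwScale_le_succ T j) (ih (Nat.le_of_succ_le hj) i)
      (apply_mem_Icc_of_mem_Icc (hv j hj) i)

theorem DRSubmodular.frankWolfe_potential_le (hDR : DRSubmodular F)
    (hgrad : HasGradientOnBox F gradF) (hFnonneg : ∀ z ∈ Icc (0 : Fin n → ℝ) 1, 0 ≤ F z)
    (hL : 0 ≤ L) (hsmooth : IsLSmoothOnBox F gradF L)
    {xstar : Fin n → ℝ} (hxstar : xstar ∈ Icc 0 1) {T : ℕ} (hT : 1 ≤ T)
    {x v : ℕ → Fin n → ℝ} (hx0 : x 0 = 0) (hv : ∀ j < T, v j ∈ Icc 0 1)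
    (hvmax : ∀ j < T, gradF (x j) ⬝ᵥ xstar ≤ gradF (x j) ⬝ᵥ v j)
    (hstep : ∀ j < T, x (j + 1) = fwRatio T j • x j + (1 - fwRatio T j) • v j) :
    ∀ j ≤ T, (fwScale T j - 1) * F xstar -
        L / 2 * n * ∑ k ∈ Finset.range j, (fwScale T (k + 1) - fwScale T k) ^ 2 ≤
      fwScale T j ^ 2 * F (x j) := by
  have hbounds := fwIterate_mem_Icc hx0 hv hstep
  intro j
  induction j with
  | zero => simpa [fwScale_zero, hx0] using hFnonneg 0 ⟨le_rfl, zero_le_one⟩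
  | succ j ih =>
    intro hj
    have hjT : j < T := hj
    set s := fwScale T j
    set s' := fwScale T (j + 1)
    have hs : 1 ≤ s := one_le_fwScale T j
    have hss' : s ≤ s' := fwScale_le_succ T j
    have hxj : x j ∈ Icc 0 1 := ⟨fun i => (hbounds j hjT.le i).1,
      fun i => (hbounds j hjT.le i).2.trans (sub_le_self _ (by positivity))⟩
    have hμ : 1 / s ∈ Icc (0 : ℝ) 1 := ⟨by positivity, (div_le_one (by linarith)).2 hs⟩
    have hγ : 1 - s / s' ∈ Icc (0 : ℝ) 1 :=
      ⟨sub_nonneg.2 (div_le_one_of_le₀ hss' (by linarith)),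
        sub_le_self _ (div_nonneg (by linarith) (by linarith))⟩
    have hstep' : x (j + 1) = x j + (1 - s / s') • (v j - x j) := by
      rw [hstep j hj, fwRatio_eq_div]; module
    have hgain := hDR.frankWolfe_step_ge hgrad hFnonneg hL hsmooth hxj (hv j hj) hxstar
      (hvmax j hj) hμ (fun i => (hbounds j hjT.le i).2) hγ
    rw [← hstep'] at hgain
    have hR : 0 ≤ L / 2 * n * ∑ k ∈ Finset.range j, (fwScale T (k + 1) - fwScale T k) ^ 2 := by
      positivity
    have := frankWolfe_potential_step hs hss' (by linarith [fwScale_succ_sub_le_one hT j])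
      (hFnonneg xstar hxstar) hR (ih hjT.le) hgain
    rw [Finset.sum_range_succ]
    linarith

end FrankWolfe

theorem fw_best_iterate_multilinear_bound_general
    (n : ℕ) (F : (Fin n → ℝ) → ℝ) (gradF : (Fin n → ℝ) → Fin n → ℝ)
    (L : ℝ) (hL : 0 ≤ L)
    (hFnonneg : ∀ z ∈ Set.Icc (0 : Fin n → ℝ) 1, 0 ≤ F z)
    (hDR : DRSubmodular F)
    (hgrad : HasGradientOnBox F gradF)
    (hsmooth : ∀ z ∈ Set.Icc (0 : Fin n → ℝ) 1, ∀ w ∈ Set.Icc (0 : Fin n → ℝ) 1,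
      |F w - F z - ∑ i, gradF z i * (w i - z i)| ≤ L / 2 * ∑ i, (w i - z i) ^ 2)
    (P : Set (Fin n → ℝ)) (hPsub : P ⊆ Set.Icc 0 1)
    (xstar : Fin n → ℝ) (hxstarP : xstar ∈ P)
    (T : ℕ) (hT : 1 ≤ T)
    (x v : ℕ → Fin n → ℝ)
    (hx0 : x 0 = 0)
    (hvP : ∀ j < T, v j ∈ P)
    (hvmax : ∀ j < T, ∀ w ∈ P, ∑ i, gradF (x j) i * w i ≤ ∑ i, gradF (x j) i * v j i)
    (hstep : ∀ j < T, x (j + 1) = fwRatio T j • x j + (1 - fwRatio T j) • v j)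
    (c : ℝ) (hLc : L ≤ c * (n : ℝ) ^ 2 * F xstar) :
    ∃ j ≤ T, F (x j) ≥
      (1 / 4 - c / 8 * (n : ℝ) ^ 3 * (harmonicNum2 T / harmonicNum T ^ 2)) * F xstar := by
  have hpot := hDR.frankWolfe_potential_le hgrad hFnonneg hL hsmooth (hPsub hxstarP) hT hx0
    (fun j hj => hPsub (hvP j hj)) (fun j hj => hvmax j hj xstar hxstarP) hstep T le_rfl
  rw [fwScale_self hT, sum_sq_fwScale_succ_sub] at hpot
  have hX : 0 ≤ harmonicNum2 T / harmonicNum T ^ 2 := by unfold harmonicNum2; positivity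
  have hLn : L * n ≤ c * n ^ 3 * F xstar := by
    nlinarith [mul_le_mul_of_nonneg_right hLc (Nat.cast_nonneg (α := ℝ) n)]
  refine ⟨T, le_rfl, ?_⟩
  nlinarith [mul_le_mul_of_nonneg_right hLn hX]

/-- If additionally `L ≤ c n² F(x*)` for a constant `c > 0` (as for the
multilinear extension of a submodular set function), then
`max_{0 ≤ j ≤ T} F(x(t_j)) ≥ (1/4 - (c/8) n³ H_{2,T}/H_T²) F(x*)`. -/
theorem fw_best_iterate_multilinear_bound
    (n : ℕ) (F : (Fin n → ℝ) → ℝ) (gradF : (Fin n → ℝ) → Fin n → ℝ)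
    (L : ℝ) (hL : 0 ≤ L)
    (hFnonneg : ∀ z ∈ Set.Icc (0 : Fin n → ℝ) 1, 0 ≤ F z)
    (hDR : DRSubmodular F)
    (hgrad : HasGradientOnBox F gradF)
    (hsmooth : ∀ z ∈ Set.Icc (0 : Fin n → ℝ) 1, ∀ w ∈ Set.Icc (0 : Fin n → ℝ) 1,
      |F w - F z - ∑ i, gradF z i * (w i - z i)| ≤ L / 2 * ∑ i, (w i - z i) ^ 2)
    (P : Set (Fin n → ℝ)) (hPsub : P ⊆ Set.Icc 0 1) (hPconv : Convex ℝ P)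
    (h0P : (0 : Fin n → ℝ) ∈ P)
    (xstar : Fin n → ℝ) (hxstarP : xstar ∈ P) (hxstarMax : ∀ z ∈ P, F z ≤ F xstar)
    (T : ℕ) (hT : 1 ≤ T)
    (x v : ℕ → Fin n → ℝ)
    (hx0 : x 0 = 0)
    (hvP : ∀ j < T, v j ∈ P)
    (hvmax : ∀ j < T, ∀ w ∈ P, ∑ i, gradF (x j) i * w i ≤ ∑ i, gradF (x j) i * v j i)
    (hstep : ∀ j < T, x (j + 1) = fwRatio T j • x j + (1 - fwRatio T j) • v j)
    (hF0 : F 0 = 0)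
    (c : ℝ) (hc : 0 < c) (hLc : L ≤ c * (n : ℝ) ^ 2 * F xstar) :
    ∃ j ≤ T, F (x j) ≥
      (1 / 4 - c / 8 * (n : ℝ) ^ 3 * (harmonicNum2 T / harmonicNum T ^ 2)) * F xstar :=
  fw_best_iterate_multilinear_bound_general n F gradF L hL hFnonneg hDR hgrad hsmooth P hPsub xstar
    hxstarP T hT x v hx0 hvP hvmax hstep c hLc
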